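/- arXiv:2102.10149 — 4 statements merged into one kernel-verified Lean document; each statement's English description precedes it below -/
import Mathlib

section
/- Suppose L has a unique maximal element m and every proper element of L lies below m (L is quasi-local). Let p ∈ L be a proper element such that p² = m² and m² ≤ p ≤ m, and let b ∈ L. Then either b is φ₂-δ₁-primary to p or b ≤ p. -/
/-- A multiplicative lattice: a complete lattice with a commutative, associative
multiplication that distributes over arbitrary joins and whose greatest element `1`
is a multiplicative identity.  We also bundle the standing assumptions of the paper:
`L` is compactly generated, `1` is compact, and products of compact elements are
compact. -/
class MultiplicativeLattice (L : Type*) extends CompleteLattice L, CommMonoid L where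
  mul_sSup : ∀ (a : L) (s : Set L), a * sSup s = ⨆ x ∈ s, a * x
  one_eq_top : (1 : L) = ⊤
  compactly_generated : ∀ x : L, ∃ s : Set L,
    (∀ y ∈ s, IsCompactElement y) ∧ sSup s = x
  compact_one : IsCompactElement (1 : L)
  compact_mul : ∀ a b : L, IsCompactElement a →
    IsCompactElement b → IsCompactElement (a * b)

variable {L : Type*}

/-- An expansion function on `L`. -/
def IsExpansion [CompleteLattice L] (δ : L → L) : Prop :=
  (∀ a, a ≤ δ a) ∧ ∀ a b : L, a ≤ b → δ a ≤ δ b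

/-- A reduction function on `L`. -/
def IsReduction [CompleteLattice L] (φ : L → L) : Prop :=
  ∀ a, φ a ≤ a

/-- `b` is `φ`-`δ`-primary to `p`. -/
def PhiDeltaPrimaryTo [MultiplicativeLattice L] (φ δ : L → L) (b p : L) : Prop :=
  ∀ x : L, x * b ≤ p → ¬ x * b ≤ φ p → x ≤ δ p

/-- `b` is `δ`-primary to `p`. -/
def DeltaPrimaryTo [MultiplicativeLattice L] (δ : L → L) (b p : L) : Prop :=
  ∀ x : L, x * b ≤ p → x ≤ δ p

/-- `b` is `φ`-prime to `p`. -/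
def PhiPrimeTo [MultiplicativeLattice L] (φ : L → L) (b p : L) : Prop :=
  ∀ x : L, x * b ≤ p → ¬ x * b ≤ φ p → x ≤ p

/-- The radical `√q`: the join of all compact elements some positive power of which
lies below `q`.  This is the expansion function `δ₁`. -/
def mlRadical [MultiplicativeLattice L] (q : L) : L :=
  sSup {x : L | IsCompactElement x ∧ ∃ n : ℕ, 0 < n ∧ x ^ n ≤ q}

/-- The function `φ_ω(q) = ⋀_{n ≥ 1} qⁿ`. -/
def phiOmega [MultiplicativeLattice L] (q : L) : L := ⨅ n : ℕ, q ^ (n + 1)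

/-- The mlResidual `(a : c)`, the join of all `x` with `x * c ≤ a`. -/
def mlResidual [MultiplicativeLattice L] (a c : L) : L := sSup {x : L | x * c ≤ a}

namespace MultiplicativeLattice

variable [MultiplicativeLattice L]

theorem mul_sup_distrib (c a b : L) : c * (a ⊔ b) = c * a ⊔ c * b := by
  rw [← sSup_pair, mul_sSup, iSup_pair]

instance : MulLeftMono L where
  elim c a b h := by
    change c * a ≤ c * b
    rw [← sup_eq_right.mpr h, mul_sup_distrib]
    exact le_sup_left

theorem lt_one_of_mul_le_of_not_le {x b p : L} (hxb : x * b ≤ p) (hb : ¬ b ≤ p) : x < 1 := by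
  refine lt_of_le_of_ne (one_eq_top (L := L) ▸ le_top) ?_
  rintro rfl
  exact hb (by simpa using hxb)

theorem le_mlRadical_of_pow_le {a q : L} {n : ℕ} (hn : 0 < n) (h : a ^ n ≤ q) :
    a ≤ mlRadical q := by
  obtain ⟨s, hs_compact, rfl⟩ := compactly_generated a
  refine sSup_le fun c hc => le_sSup ⟨hs_compact c hc, n, hn, ?_⟩
  exact (pow_le_pow_left' (le_sSup hc) n).trans h

end MultiplicativeLattice

theorem phiTwoDeltaOnePrimary_or_le_of_quasiLocal_general [MultiplicativeLattice L]
    (m : L) (hmax : ∀ x : L, x < 1 → x ≤ m)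
    (p : L) (hmp : m ^ 2 ≤ p)
    (b : L) :
    PhiDeltaPrimaryTo (fun q => q ^ 2) mlRadical b p ∨ b ≤ p := by
  by_cases hb : b ≤ p
  · exact Or.inr hb
  · refine Or.inl fun x hxb _ => ?_
    have hx : x < 1 := MultiplicativeLattice.lt_one_of_mul_le_of_not_le hxb hb
    exact (hmax x hx).trans (MultiplicativeLattice.le_mlRadical_of_pow_le two_pos hmp)

theorem phiTwoDeltaOnePrimary_or_le_of_quasiLocal [MultiplicativeLattice L]
    (m : L) (hm : m < 1) (hmax : ∀ x : L, x < 1 → x ≤ m)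
    (p : L) (hp : p < 1) (hpm : p ^ 2 = m ^ 2) (hmp : m ^ 2 ≤ p) (hpm' : p ≤ m)
    (b : L) :
    PhiDeltaPrimaryTo (fun q => q ^ 2) mlRadical b p ∨ b ≤ p :=
  phiTwoDeltaOnePrimary_or_le_of_quasiLocal_general m hmax p hmp b
end

section
/- Let δ be an expansion function on L, let p ∈ L be a proper element and b ∈ L. Then b is φ_ω-δ-primary to p if and only if b is φ_n-δ-primary to p for every integer n ≥ 2. -/
variable {L : Type*}

section

variable [MultiplicativeLattice L] {φ ψ δ : L → L} {b p : L}

theorem PhiDeltaPrimaryTo.of_le (h : PhiDeltaPrimaryTo ψ δ b p) (hle : ψ p ≤ φ p) :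
    PhiDeltaPrimaryTo φ δ b p :=
  fun x hxb hnot => h x hxb fun hψ => hnot (hψ.trans hle)

theorem PhiDeltaPrimaryTo.iInf {ι : Sort*} {φ : ι → L → L}
    (h : ∀ i, PhiDeltaPrimaryTo (φ i) δ b p) :
    PhiDeltaPrimaryTo (fun q => ⨅ i, φ i q) δ b p := by
  intro x hxb hnot
  obtain ⟨i, hi⟩ := not_forall.mp (mt le_iInf_iff.mpr hnot)
  exact h i x hxb hi

theorem phiOmega_le_pow (q : L) {n : ℕ} (hn : n ≠ 0) : phiOmega q ≤ q ^ n := by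
  obtain ⟨m, rfl⟩ := Nat.exists_eq_succ_of_ne_zero hn
  exact iInf_le _ m

end

theorem phiOmega_deltaPrimary_iff_forall_phiN_general [MultiplicativeLattice L]
    (δ : L → L) (p : L) (b : L) :
    PhiDeltaPrimaryTo phiOmega δ b p ↔
      ∀ n : ℕ, 2 ≤ n → PhiDeltaPrimaryTo (fun q => q ^ n) δ b p := by
  refine ⟨fun h n hn => h.of_le (phiOmega_le_pow p (by omega)), fun h => ?_⟩
  refine PhiDeltaPrimaryTo.iInf fun n => ?_
  rcases n with _ | n
  · -- `p¹ = p`, so the exceptional case `x * b ≰ p` contradicts `x * b ≤ p`.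
    intro x hxb hnot
    exact absurd hxb (by simpa using hnot)
  · exact h (n + 2) (by omega)

theorem phiOmega_deltaPrimary_iff_forall_phiN [MultiplicativeLattice L]
    (δ : L → L) (hδ : IsExpansion δ) (p : L) (hp : p < 1) (b : L) :
    PhiDeltaPrimaryTo phiOmega δ b p ↔
      ∀ n : ℕ, 2 ≤ n → PhiDeltaPrimaryTo (fun q => q ^ n) δ b p :=
  phiOmega_deltaPrimary_iff_forall_phiN_general δ p b
end

section
/- Let δ be an expansion function on L. Let p ∈ L be a nonzero proper element that is non-nilpotent (pⁿ ≠ 0 for every positive integer n) and satisfies the restricted cancellation law: for all a, c ∈ L, p·a = p·c ≠ 0 implies a = c. Let b ∈ L with p < b. Then b is φ_n-δ-primary to p for every integer n ≥ 2 if and only if b is δ-primary to p. -/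
variable {L : Type*}

namespace MultiplicativeLattice

variable [MultiplicativeLattice L]

theorem mul_sup (a x y : L) : a * (x ⊔ y) = a * x ⊔ a * y := by
  rw [← sSup_pair, mul_sSup, iSup_pair]

theorem sup_mul (x y a : L) : (x ⊔ y) * a = x * a ⊔ y * a := by
  simp only [mul_comm _ a, mul_sup]

instance : IsOrderedMonoid L where
  mul_le_mul_left a b hab c := by
    rw [← sup_eq_right.mpr hab, sup_mul]
    exact le_sup_left

theorem mul_le_left (a b : L) : a * b ≤ a := by
  simpa using mul_le_mul_right (one_eq_top (L := L) ▸ le_top : b ≤ 1) a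

/-- As `p * p ≤ p * b`, the inequality would give `p * b = p * p ≠ ⊥`, and cancellation `b = p`. -/
theorem not_mul_le_sq_of_lt {p b : L} (hp2 : p ^ 2 ≠ ⊥)
    (hcanc : ∀ a c : L, p * a = p * c → p * a ≠ ⊥ → a = c) (hpb : p < b) :
    ¬ p * b ≤ p ^ 2 := by
  intro hle
  have heq : p * b = p * p := le_antisymm (sq p ▸ hle) (mul_le_mul_right hpb.le p)
  exact hpb.ne' (hcanc b p heq (heq ▸ sq p ▸ hp2))

end MultiplicativeLattice

section

variable [MultiplicativeLattice L] {φ δ : L → L} {b p : L}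

theorem DeltaPrimaryTo.phiDeltaPrimaryTo (h : DeltaPrimaryTo δ b p) :
    PhiDeltaPrimaryTo φ δ b p :=
  fun x hx _ => h x hx

/-- Replacing `x` by `x ⊔ p` keeps `x * b ≤ p` and pushes `x * b` above `p * b`, out of `φ p`. -/
theorem PhiDeltaPrimaryTo.deltaPrimaryTo (h : PhiDeltaPrimaryTo φ δ b p)
    (hpb : ¬ p * b ≤ φ p) : DeltaPrimaryTo δ b p := by
  intro x hx
  have hsup := MultiplicativeLattice.sup_mul x p b
  refine le_sup_left.trans (h (x ⊔ p) ?_ fun hle => hpb ?_)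
  · exact hsup ▸ sup_le hx (MultiplicativeLattice.mul_le_left p b)
  · exact (hsup ▸ le_sup_right).trans hle

end

theorem forall_phiN_deltaPrimary_iff_deltaPrimary_general [MultiplicativeLattice L]
    (δ : L → L)
    (p : L)
    (hnonnil : ∀ n : ℕ, 0 < n → p ^ n ≠ ⊥)
    (hcanc : ∀ a c : L, p * a = p * c → p * a ≠ ⊥ → a = c)
    (b : L) (hpb : p < b) :
    (∀ n : ℕ, 2 ≤ n → PhiDeltaPrimaryTo (fun q => q ^ n) δ b p) ↔
      DeltaPrimaryTo δ b p :=
  ⟨fun h => (h 2 le_rfl).deltaPrimaryTo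
      (MultiplicativeLattice.not_mul_le_sq_of_lt (hnonnil 2 two_pos) hcanc hpb),
    fun h _ _ => h.phiDeltaPrimaryTo⟩

theorem forall_phiN_deltaPrimary_iff_deltaPrimary [MultiplicativeLattice L]
    (δ : L → L) (hδ : IsExpansion δ)
    (p : L) (hp0 : p ≠ ⊥) (hp : p < 1)
    (hnonnil : ∀ n : ℕ, 0 < n → p ^ n ≠ ⊥)
    (hcanc : ∀ a c : L, p * a = p * c → p * a ≠ ⊥ → a = c)
    (b : L) (hpb : p < b) :
    (∀ n : ℕ, 2 ≤ n → PhiDeltaPrimaryTo (fun q => q ^ n) δ b p) ↔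
      DeltaPrimaryTo δ b p :=
  forall_phiN_deltaPrimary_iff_deltaPrimary_general δ p hnonnil hcanc b hpb
end

section
/- Let δ be an expansion function and φ a reduction function on L, let p ∈ L be a proper element, and let b ∈ L be φ-δ-primary to p. Let q ∈ L with q ≰ p (so that (p : q) is proper). If (φ(p) : q) ≤ φ((p : q)) and (δ(p) : q) ≤ δ((p : q)), then b is φ-δ-primary to (p : q). -/
variable {L : Type*}

/-! Multiplying by `q` transports the question from `(p : q)` to `p`: if `x * b ≤ (p : q)`
then `(x * q) * b ≤ p`, and the primary property of `b` at `p`, read back through the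
residual by `q`, gives the property at `(p : q)` thanks to the two compatibility hypotheses. -/

namespace MultiplicativeLattice

variable [MultiplicativeLattice L]

theorem mul_le_mul_left {a b : L} (h : a ≤ b) (c : L) : c * a ≤ c * b := by
  have hab : sSup ({a, b} : Set L) = b := by simp [h]
  calc c * a ≤ ⨆ x ∈ ({a, b} : Set L), c * x := le_biSup _ (by simp)
    _ = c * b := by rw [← mul_sSup, hab]

theorem le_mlResidual_iff {x a c : L} : x ≤ mlResidual a c ↔ x * c ≤ a := by
  refine ⟨fun hx => ?_, fun hx => le_sSup hx⟩
  calc x * c ≤ mlResidual a c * c := by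
        simpa only [mul_comm c] using mul_le_mul_left hx c
    _ = ⨆ y ∈ {y : L | y * c ≤ a}, c * y := by rw [mul_comm, mlResidual, mul_sSup]
    _ ≤ a := iSup₂_le fun y hy => by rwa [mul_comm]

end MultiplicativeLattice

open MultiplicativeLattice

theorem phiDeltaPrimary_residual_general [MultiplicativeLattice L]
    (δ φ : L → L)
    (p : L) (b : L)
    (h : PhiDeltaPrimaryTo φ δ b p) (q : L)
    (h1 : mlResidual (φ p) q ≤ φ (mlResidual p q))
    (h2 : mlResidual (δ p) q ≤ δ (mlResidual p q)) :
    PhiDeltaPrimaryTo φ δ b (mlResidual p q) := by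
  intro x hxb hxb_not_le
  have hxqb : x * q * b ≤ p := by
    rw [mul_right_comm]
    exact le_mlResidual_iff.1 hxb
  have hxqb_not_le : ¬ x * q * b ≤ φ p := fun hle =>
    hxb_not_le (h1.trans' (le_mlResidual_iff.2 (by rwa [mul_right_comm] at hle)))
  exact (le_mlResidual_iff.2 (h _ hxqb hxqb_not_le)).trans h2

theorem phiDeltaPrimary_residual [MultiplicativeLattice L]
    (δ φ : L → L) (hδ : IsExpansion δ) (hφ : IsReduction φ)
    (p : L) (hp : p < 1) (b : L)
    (h : PhiDeltaPrimaryTo φ δ b p) (q : L) (hq : ¬ q ≤ p)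
    (h1 : mlResidual (φ p) q ≤ φ (mlResidual p q))
    (h2 : mlResidual (δ p) q ≤ δ (mlResidual p q)) :
    PhiDeltaPrimaryTo φ δ b (mlResidual p q) :=
  phiDeltaPrimary_residual_general δ φ p b h q h1 h2
end
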